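/- Let G be a simple graph with vertex set V, let W ⊆ V be a minimal vertex cover of G, and let s be a natural number. Then W × {0,...,s} is a minimal vertex cover of the jet graph J_s(G). -/

import Mathlib

/-- The jet graph of order `s` of a simple graph `G`: vertices are pairs `(v, i)`
with `i ∈ {0,…,s}`, and `(a,i)` is adjacent to `(b,j)` iff `G.Adj a b` and `i + j ≤ s`. -/
def jetGraph {V : Type*} (G : SimpleGraph V) (s : ℕ) : SimpleGraph (V × Fin (s + 1)) where
  Adj p q := G.Adj p.1 q.1 ∧ p.2.val + q.2.val ≤ s
  symm := by
    constructor
    intro p q h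
    exact ⟨h.1.symm, by have := h.2; omega⟩
  loopless := by
    constructor
    intro p h
    exact G.irrefl h.1

/-- `C` is a vertex cover of `H`. -/
def IsVertexCover {W : Type*} (H : SimpleGraph W) (C : Set W) : Prop :=
  ∀ a b : W, H.Adj a b → a ∈ C ∨ b ∈ C

/-- `C` is a minimal vertex cover of `H`. -/
def IsMinimalVertexCover {W : Type*} (H : SimpleGraph W) (C : Set W) : Prop :=
  IsVertexCover H C ∧ ∀ D : Set W, D ⊂ C → ¬ IsVertexCover H D

/-!
Minimal vertex covers are exactly the covers each of whose vertices has a neighbour outside the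
cover. The projection `J_s(G) → G` is a graph homomorphism, so `W × {0,…,s}` is a cover; and a
neighbour `u ∉ W` of `v ∈ W` in `G` gives the neighbour `(u, 0) ∉ W × {0,…,s}` of every `(v, i)`.
-/

section

variable {U V : Type*}

theorem IsVertexCover.comap {H : SimpleGraph U} {G : SimpleGraph V} (f : H →g G) {C : Set V}
    (hC : IsVertexCover G C) : IsVertexCover H (f ⁻¹' C) :=
  fun a b hab => hC (f a) (f b) (f.map_adj hab)

theorem isMinimalVertexCover_iff {H : SimpleGraph U} {C : Set U} :
    IsMinimalVertexCover H C ↔ IsVertexCover H C ∧ ∀ v ∈ C, ∃ u, H.Adj v u ∧ u ∉ C := by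
  constructor
  · rintro ⟨hcov, hmin⟩
    refine ⟨hcov, fun v hv => ?_⟩
    by_contra! hnbrs
    refine hmin (C \ {v}) (Set.sdiff_singleton_ssubset.mpr hv) fun a b hab => ?_
    have hne : a ≠ b := H.ne_of_adj hab
    rcases hcov a b hab with ha | hb
    · by_cases hav : a = v
      · subst hav
        exact Or.inr ⟨hnbrs b hab, hne.symm⟩
      · exact Or.inl ⟨ha, hav⟩
    · by_cases hbv : b = v
      · subst hbv
        exact Or.inl ⟨hnbrs a hab.symm, hne⟩
      · exact Or.inr ⟨hb, hbv⟩
  · rintro ⟨hcov, hnbrs⟩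
    refine ⟨hcov, fun D hD hDcov => ?_⟩
    obtain ⟨v, hvC, hvD⟩ := Set.exists_of_ssubset hD
    obtain ⟨u, hvu, huC⟩ := hnbrs v hvC
    rcases hDcov v u hvu with hv | hu
    · exact hvD hv
    · exact huC (hD.subset hu)

namespace jetGraph

def fstHom (G : SimpleGraph V) (s : ℕ) : jetGraph G s →g G where
  toFun := Prod.fst
  map_rel' h := h.1

theorem adj_zero_right {G : SimpleGraph V} {s : ℕ} {v u : V} (i : Fin (s + 1)) :
    (jetGraph G s).Adj (v, i) (u, 0) ↔ G.Adj v u :=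
  ⟨And.left, fun h => ⟨h, by simpa using Nat.lt_succ_iff.mp i.isLt⟩⟩

end jetGraph

end

theorem jetGraph_minimal_cover_of_minimal_cover {V : Type*} (G : SimpleGraph V)
    (W : Set V) (hW : IsMinimalVertexCover G W) (s : ℕ) :
    IsMinimalVertexCover (jetGraph G s) {p : V × Fin (s + 1) | p.1 ∈ W} := by
  obtain ⟨hcov, hnbrs⟩ := isMinimalVertexCover_iff.mp hW
  refine isMinimalVertexCover_iff.mpr ⟨hcov.comap (jetGraph.fstHom G s), ?_⟩
  rintro ⟨v, i⟩ hv
  obtain ⟨u, hvu, huW⟩ := hnbrs v hv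
  exact ⟨(u, 0), (jetGraph.adj_zero_right i).mpr hvu, huW⟩
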